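/- arXiv:2502.21020 — 5 statements merged into one kernel-verified Lean document; each statement's English description precedes it below -/
import Mathlib

section
/- Let M be an atomic commutative cancellative monoid. For an atom a of M that is not prime, ω(a) ≤ t(a), where t(a) is the local tame degree of a. -/
/-- `a` has a factorization into `k` atoms (irreducibles). -/
def FactorLen {M : Type*} [CancelCommMonoid M] (a : M) (k : ℕ) : Prop :=
  ∃ l : List M, l.length = k ∧ (∀ x ∈ l, Irreducible x) ∧ l.prod = a

/-- The length set of `a`, with the convention `L(a) = {0}` for units. -/
def LengthSet {M : Type*} [CancelCommMonoid M] (a : M) : Set ℕ :=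
  {k | (IsUnit a ∧ k = 0) ∨ FactorLen a k}

/-- `M` is atomic: every non-unit is a finite product of atoms. -/
def Atomic (M : Type*) [CancelCommMonoid M] : Prop :=
  ∀ a : M, ¬ IsUnit a → ∃ k, FactorLen a k

/-- `N` is an admissible bound for `ω(a)`: whenever `a` divides a product of elements of `M`,
it divides a subproduct of at most `N` of the factors. -/
def OmegaBound {M : Type*} [CancelCommMonoid M] (a : M) (N : ℕ) : Prop :=
  ∀ l : List M, a ∣ l.prod → ∃ t : List M, t.Sublist l ∧ t.length ≤ N ∧ a ∣ t.prod

/-- `ω(a)`, the smallest `N ∈ ℕ₀ ∪ {∞}` admissible for `a`. -/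
noncomputable def omegaVal {M : Type*} [CancelCommMonoid M] (a : M) : ℕ∞ :=
  sInf {N : ℕ∞ | ∃ n : ℕ, N = (n : ℕ∞) ∧ OmegaBound a n}

/-- `N` is an admissible bound for the local tame degree `t(a)` of an atom `a`: whenever
`a` divides a product of atoms `v₁ ⋯ v_m` but no proper subproduct, the product can be
refactored as `a·u₂⋯u_ℓ` with `max {ℓ, m} ≤ N`. -/
def TameBound {M : Type*} [CancelCommMonoid M] (a : M) (N : ℕ) : Prop :=
  ∀ l : List M, (∀ x ∈ l, Irreducible x) → a ∣ l.prod →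
    (∀ t : List M, t.Sublist l → t ≠ l → ¬ a ∣ t.prod) →
    ∃ us : List M, (∀ x ∈ us, Irreducible x) ∧ l.prod = a * us.prod ∧
      us.length + 1 ≤ N ∧ l.length ≤ N

/-- `t(a)`, the local tame degree of `a`. -/
noncomputable def tameVal {M : Type*} [CancelCommMonoid M] (a : M) : ℕ∞ :=
  sInf {N : ℕ∞ | ∃ n : ℕ, N = (n : ℕ∞) ∧ TameBound a n}

/-
Take a shortest subproduct `t` of the factors that `a` divides; its factors are non-units.
Factor each of them into atoms and take a shortest subproduct `s` of all these atoms that `a`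
divides; a tame bound `n` for `a` applies to `s`, so `s` has at most `n` atoms. Every factor
of `t` contributes an atom to `s`, since otherwise `a` would divide a shorter subproduct of `t`;
hence `|t| ≤ |s| ≤ n`.
-/

namespace List

variable {α : Type*}

theorem exists_sublist_minimal_length (P : List α → Prop) {l : List α} (hl : P l) :
    ∃ t, t <+ l ∧ P t ∧ ∀ t', t' <+ l → P t' → t.length ≤ t'.length := by
  classical
  have hex : ∃ k, ∃ t, t <+ l ∧ t.length = k ∧ P t :=
    ⟨l.length, l, Sublist.refl l, rfl, hl⟩
  obtain ⟨t, htl, htk, ht⟩ := Nat.find_spec hex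
  exact ⟨t, htl, ht, fun t' ht'l ht' => htk ▸ Nat.find_min' hex ⟨t', ht'l, rfl, ht'⟩⟩

theorem exists_sublist_map_prod_of_sublist_flatten [CommMonoid α] {ws : List (List α)}
    {s : List α} (hs : s <+ ws.flatten) :
    ∃ t, t <+ ws.map prod ∧ t.length ≤ s.length ∧ s.prod ∣ t.prod := by
  induction ws generalizing s with
  | nil => exact ⟨[], Sublist.slnil, Nat.zero_le _, by simp_all⟩
  | cons w ws ih =>
    obtain ⟨s₁, s₂, rfl, hs₁, hs₂⟩ := sublist_append_iff.mp hs
    obtain ⟨t, ht, hlen, hdvd⟩ := ih hs₂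
    by_cases hne : s₁ = []
    · subst hne
      exact ⟨t, ht.cons _, by simpa using hlen, by simpa using hdvd⟩
    · refine ⟨w.prod :: t, ht.cons_cons _, ?_, ?_⟩
      · have := length_pos_iff.mpr hne
        simp only [length_cons, length_append]
        omega
      · simpa only [prod_append, prod_cons] using mul_dvd_mul hs₁.prod_dvd_prod hdvd

end List

section

variable {M : Type*} [CancelCommMonoid M]

theorem not_isUnit_of_mem_of_length_minimal {a : M} {t : List M} (ht : a ∣ t.prod)
    (hmin : ∀ t' : List M, t'.Sublist t → a ∣ t'.prod → t.length ≤ t'.length)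
    {x : M} (hx : x ∈ t) :
    ¬IsUnit x := by
  classical
  intro hux
  have hdvd : a ∣ (t.erase x).prod := by rwa [← hux.dvd_mul_left, List.prod_erase hx]
  have := hmin _ t.erase_sublist hdvd
  rw [List.length_erase_of_mem hx] at this
  have := List.length_pos_of_mem hx
  omega

theorem Atomic.exists_atom_lists_of_forall_not_isUnit (hM : Atomic M) {t : List M}
    (ht : ∀ x ∈ t, ¬IsUnit x) :
    ∃ ws : List (List M), ws.map List.prod = t ∧ ∀ w ∈ ws, ∀ x ∈ w, Irreducible x := by
  induction t with
  | nil => exact ⟨[], rfl, by simp⟩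
  | cons x t ih =>
    obtain ⟨ws, rfl, hws⟩ := ih fun y hy => ht y (List.mem_cons_of_mem _ hy)
    obtain ⟨-, w, -, hw, rfl⟩ := hM x (ht x List.mem_cons_self)
    refine ⟨w :: ws, rfl, ?_⟩
    simpa [List.forall_mem_cons] using ⟨hw, hws⟩

theorem omegaBound_of_tameBound (hM : Atomic M) {a : M} {n : ℕ} (h : TameBound a n) :
    OmegaBound a n := by
  intro l hl
  obtain ⟨t, htl, hat, htmin⟩ := List.exists_sublist_minimal_length (a ∣ ·.prod) hl
  refine ⟨t, htl, ?_, hat⟩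
  replace htmin : ∀ t' : List M, t'.Sublist t → a ∣ t'.prod → t.length ≤ t'.length :=
    fun t' ht' => htmin t' (ht'.trans htl)
  obtain ⟨ws, rfl, hws⟩ :=
    hM.exists_atom_lists_of_forall_not_isUnit fun x => not_isUnit_of_mem_of_length_minimal hat htmin
  obtain ⟨s, hs, has, hsmin⟩ :=
    List.exists_sublist_minimal_length (a ∣ ·.prod) (l := ws.flatten)
      (by rwa [List.prod_flatten])
  have hs_atoms : ∀ x ∈ s, Irreducible x := fun x hx => by
    obtain ⟨w, hw, hxw⟩ := List.mem_flatten.mp (hs.mem hx)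
    exact hws w hw x hxw
  have hs_proper : ∀ s' : List M, s'.Sublist s → s' ≠ s → ¬a ∣ s'.prod :=
    fun s' hs' hne hdvd => hne (hs'.eq_of_length_le (hsmin s' (hs'.trans hs) hdvd))
  obtain ⟨-, -, -, -, hsn⟩ := h s hs_atoms has hs_proper
  obtain ⟨t', ht', hlen, hdvd⟩ := List.exists_sublist_map_prod_of_sublist_flatten hs
  calc (ws.map List.prod).length ≤ t'.length := htmin t' ht' (has.trans hdvd)
    _ ≤ s.length := hlen
    _ ≤ n := hsn

end

theorem omegaVal_le_tameVal_general {M : Type*} [CancelCommMonoid M] (hM : Atomic M)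
    (a : M) :
    omegaVal a ≤ tameVal a := by
  refine le_sInf ?_
  rintro _ ⟨n, rfl, hn⟩
  exact sInf_le ⟨n, rfl, omegaBound_of_tameBound hM hn⟩

/-- In an atomic cancellative commutative monoid, for an atom `a` that is not prime,
`ω(a) ≤ t(a)`. -/
theorem omegaVal_le_tameVal {M : Type*} [CancelCommMonoid M] (hM : Atomic M)
    (a : M) (ha : Irreducible a) (hnp : ¬ ∀ b c : M, a ∣ b * c → a ∣ b ∨ a ∣ c) :
    omegaVal a ≤ tameVal a :=
  omegaVal_le_tameVal_general hM a
end

section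
/- Let M be an atomic commutative cancellative monoid in which all length sets are finite. Then the elasticity satisfies ρ(M) = lim_{k→∞} (sup U_k(M))/k, where the limit is taken in ℝ_{≥1} ∪ {∞}; in particular, ρ(M) = sup_k (sup U_k(M))/k. -/
open scoped ENNReal

/-- The elasticity `ρ(M) = sup { ρ(L(a)) : a ∈ M non-unit }`, where
`ρ(L) = max L / min L`, taken in `ℝ≥0∞`. -/
noncomputable def elasticity (M : Type*) [CancelCommMonoid M] : ℝ≥0∞ :=
  ⨆ (a : M) (_ : ¬ IsUnit a),
    (⨆ n ∈ LengthSet a, (n : ℝ≥0∞)) / ((sInf (LengthSet a) : ℕ) : ℝ≥0∞)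

/-- `U_k(M)`, the union of all length sets containing `k`. -/
def UnionLk (M : Type*) [CancelCommMonoid M] (k : ℕ) : Set ℕ :=
  {n | ∃ a : M, ¬ IsUnit a ∧ k ∈ LengthSet a ∧ n ∈ LengthSet a}

section Aux

variable {M : Type*} [CancelCommMonoid M]

lemma FactorLen.mul {a b : M} {j j' : ℕ} (h : FactorLen a j) (h' : FactorLen b j') :
    FactorLen (a * b) (j + j') := by
  obtain ⟨l, hl, hirr, hp⟩ := h
  obtain ⟨l', hl', hirr', hp'⟩ := h'
  refine ⟨l ++ l', by simp [hl, hl'], fun x hx => ?_, by simp [hp, hp']⟩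
  rcases List.mem_append.1 hx with h | h
  exacts [hirr x h, hirr' x h]

lemma FactorLen.pow {a : M} {j : ℕ} (h : FactorLen a j) (t : ℕ) : FactorLen (a ^ t) (t * j) := by
  induction t with
  | zero => exact ⟨[], by simp, by simp, by simp⟩
  | succ t ih =>
    rw [pow_succ, Nat.succ_mul]
    exact ih.mul h

lemma FactorLen.isUnit_of_zero {a : M} (h : FactorLen a 0) : IsUnit a := by
  obtain ⟨l, hl, -, hp⟩ := h
  rw [List.length_eq_zero_iff] at hl
  subst hl
  simp at hp
  exact hp ▸ isUnit_one

lemma FactorLen.not_isUnit {a : M} {j : ℕ} (h : FactorLen a j) (hj : j ≠ 0) : ¬ IsUnit a := by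
  obtain ⟨l, hl, hirr, hp⟩ := h
  cases l with
  | nil => simp at hl; omega
  | cons x tl =>
    intro hu
    rw [← hp] at hu
    simp only [List.prod_cons] at hu
    exact (hirr x (by simp)).not_isUnit (isUnit_of_mul_isUnit_left hu)

lemma factorLen_of_mem {a : M} {j : ℕ} (hnu : ¬ IsUnit a) (h : j ∈ LengthSet a) :
    FactorLen a j := h.resolve_left (fun h' => hnu h'.1)

end Aux

/-- In an atomic cancellative commutative monoid all of whose length sets are finite, the
elasticity is the limit of `sup U_k(M) / k`; in particular it equals the supremum of these
quotients. -/
theorem elasticity_eq_lim {M : Type*} [CancelCommMonoid M] (hM : Atomic M)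
    (hfin : ∀ a : M, (LengthSet a).Finite) :
    Filter.Tendsto (fun k : ℕ => (⨆ n ∈ UnionLk M k, (n : ℝ≥0∞)) / (k : ℝ≥0∞))
      Filter.atTop (nhds (elasticity M)) ∧
    elasticity M = ⨆ (k : ℕ) (_ : 0 < k), (⨆ n ∈ UnionLk M k, (n : ℝ≥0∞)) / (k : ℝ≥0∞) := by
  set f : ℕ → ℝ≥0∞ := fun k => (⨆ n ∈ UnionLk M k, (n : ℝ≥0∞)) / (k : ℝ≥0∞) with hfdef
  -- Upper bound
  have hA : ∀ k : ℕ, 0 < k → f k ≤ elasticity M := by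
    intro k hk
    rw [hfdef]
    simp only [ENNReal.iSup_div]
    refine iSup₂_le fun n hn => ?_
    obtain ⟨a, hnu, hka, hna⟩ := hn
    set m := sInf (LengthSet a) with hm
    have hmk : m ≤ k := Nat.sInf_le hka
    have calc1 : (n : ℝ≥0∞) / (k : ℝ≥0∞) ≤ (n : ℝ≥0∞) / (m : ℝ≥0∞) := by
      gcongr
    refine calc1.trans ?_
    have calc2 : (n : ℝ≥0∞) / (m : ℝ≥0∞) ≤
        (⨆ j ∈ LengthSet a, (j : ℝ≥0∞)) / (m : ℝ≥0∞) := by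
      gcongr
      exact le_biSup _ hna
    refine calc2.trans ?_
    exact le_iSup₂_of_le a hnu le_rfl
  -- Lower bound
  have hB : ∀ c, c < elasticity M → ∀ᶠ k in Filter.atTop, c < f k := by
    intro c hc
    rw [elasticity] at hc
    simp only [lt_iSup_iff] at hc
    obtain ⟨a, hnu, hca⟩ := hc
    set m := sInf (LengthSet a) with hm
    have hne : (LengthSet a).Nonempty := by
      obtain ⟨j, hj⟩ := hM a hnu
      exact ⟨j, Or.inr hj⟩
    have hmem : m ∈ LengthSet a := Nat.sInf_mem hne
    have hFm : FactorLen a m := factorLen_of_mem hnu hmem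
    have hm0 : m ≠ 0 := fun h => hnu (FactorLen.isUnit_of_zero (h ▸ hFm))
    have hmcast0 : ((m : ℕ) : ℝ≥0∞) ≠ 0 := by exact_mod_cast hm0
    have hmcastt : ((m : ℕ) : ℝ≥0∞) ≠ ∞ := ENNReal.natCast_ne_top m
    rw [ENNReal.lt_div_iff_mul_lt (Or.inl hmcast0) (Or.inl hmcastt)] at hca
    rw [lt_iSup_iff] at hca
    obtain ⟨Mx, hca⟩ := hca
    rw [lt_iSup_iff] at hca
    obtain ⟨hMxmem, hca⟩ := hca
    have hFMx : FactorLen a Mx := factorLen_of_mem hnu hMxmem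
    -- an atom
    obtain ⟨u, hu⟩ : ∃ u : M, Irreducible u := by
      obtain ⟨l, hl, hirr, hp⟩ := hFm
      cases l with
      | nil => simp at hl; omega
      | cons x tl => exact ⟨x, hirr x (by simp)⟩
    have hFu : FactorLen u 1 := ⟨[u], rfl, by simpa using hu, by simp⟩
    have hFur : ∀ r : ℕ, FactorLen (u ^ r) r := fun r => by
      simpa using hFu.pow r
    set d := c * (m : ℝ≥0∞) with hd
    have hdlt : d < (Mx : ℝ≥0∞) := hca
    have hdne : d ≠ ∞ := hdlt.ne_top
    have hsub0 : (Mx : ℝ≥0∞) - d ≠ 0 := by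
      simpa [tsub_eq_zero_iff_le, not_le] using hdlt
    have hsubt : (Mx : ℝ≥0∞) - d ≠ ∞ := by
      exact ne_top_of_le_ne_top (ENNReal.natCast_ne_top Mx) tsub_le_self
    obtain ⟨t₀, ht₀⟩ : ∃ t₀ : ℕ, d / ((Mx : ℝ≥0∞) - d) < t₀ :=
      ENNReal.exists_nat_gt (by
        exact (ENNReal.div_lt_top hdne hsub0).ne)
    have key : ∀ t : ℕ, t₀ ≤ t → d * ((t : ℝ≥0∞) + 1) < (Mx : ℝ≥0∞) * t := by
      intro t ht
      have h2 : d < ((Mx : ℝ≥0∞) - d) * t := by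
        have h3 : d / ((Mx : ℝ≥0∞) - d) < (t : ℝ≥0∞) :=
          ht₀.trans_le (by exact_mod_cast ht)
        rw [ENNReal.div_lt_iff (Or.inl hsub0) (Or.inl hsubt)] at h3
        rwa [mul_comm] at h3
      calc d * ((t : ℝ≥0∞) + 1) = d * t + d := by ring
        _ < d * t + ((Mx : ℝ≥0∞) - d) * t := by
            exact ENNReal.add_lt_add_left (by
              exact ENNReal.mul_ne_top hdne (ENNReal.natCast_ne_top t)) h2
        _ = (d + ((Mx : ℝ≥0∞) - d)) * t := by rw [add_mul]
        _ = (Mx : ℝ≥0∞) * t := by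
            rw [add_tsub_cancel_of_le hdlt.le]
    rw [Filter.eventually_atTop]
    refine ⟨m * (t₀ + 1), fun k hk => ?_⟩
    set t := k / m with htdef
    set r := k % m with hrdef
    have hkeq : k = t * m + r := by
      rw [htdef, hrdef, mul_comm]
      exact (Nat.div_add_mod k m).symm
    have htge : t₀ + 1 ≤ t := by
      rw [htdef]
      exact Nat.le_div_iff_mul_le (Nat.pos_of_ne_zero hm0) |>.2 (by rw [Nat.mul_comm]; exact hk)
    have hrlt : r < m := Nat.mod_lt k (Nat.pos_of_ne_zero hm0)
    -- the witness element
    have hx1 : FactorLen (a ^ t * u ^ r) (t * m + r) := (hFm.pow t).mul (hFur r)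
    have hx2 : FactorLen (a ^ t * u ^ r) (t * Mx + r) := (hFMx.pow t).mul (hFur r)
    have hxnu : ¬ IsUnit (a ^ t * u ^ r) := by
      refine hx1.not_isUnit ?_
      have : 1 ≤ t := by omega
      have : 1 ≤ m := Nat.pos_of_ne_zero hm0
      positivity
    have hnU : (t * Mx + r) ∈ UnionLk M k :=
      ⟨a ^ t * u ^ r, hxnu, Or.inr (hkeq ▸ hx1), Or.inr hx2⟩
    -- conclude
    have hk0 : (k : ℝ≥0∞) ≠ 0 := by
      have : 0 < k :=
        lt_of_lt_of_le (Nat.mul_pos (Nat.pos_of_ne_zero hm0) (Nat.succ_pos t₀)) hk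
      exact_mod_cast this.ne'
    have hck : c * (k : ℝ≥0∞) < ((t * Mx + r : ℕ) : ℝ≥0∞) := by
      have step1 : c * (k : ℝ≥0∞) ≤ d * ((t : ℝ≥0∞) + 1) := by
        rw [hd, mul_assoc]
        gcongr
        have : (k : ℝ≥0∞) = ((t * m + r : ℕ) : ℝ≥0∞) := congrArg Nat.cast hkeq
        rw [this]
        push_cast
        calc (t : ℝ≥0∞) * m + r ≤ (t : ℝ≥0∞) * m + m := by
              gcongr
          _ = (m : ℝ≥0∞) * ((t : ℝ≥0∞) + 1) := by ring
      refine step1.trans_lt ?_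
      refine (key t (by omega)).trans_le ?_
      push_cast
      calc (Mx : ℝ≥0∞) * t = (t : ℝ≥0∞) * Mx := by ring
        _ ≤ (t : ℝ≥0∞) * Mx + r := le_self_add
    have : c < ((t * Mx + r : ℕ) : ℝ≥0∞) / (k : ℝ≥0∞) := by
      rw [ENNReal.lt_div_iff_mul_lt (Or.inl hk0) (Or.inl (ENNReal.natCast_ne_top k))]
      exact hck
    refine this.trans_le ?_
    refine ENNReal.div_le_div ?_ le_rfl
    exact le_biSup (fun n : ℕ => (n : ℝ≥0∞)) hnU
  constructor
  · rw [tendsto_order]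
    constructor
    · exact fun c hc => hB c hc
    · intro c hc
      filter_upwards [Filter.eventually_gt_atTop 0] with k hk
      exact lt_of_le_of_lt (hA k hk) hc
  · refine le_antisymm ?_ (iSup₂_le hA)
    refine le_of_forall_lt fun c hc => ?_
    obtain ⟨k, hck, hk0⟩ := ((hB c hc).and (Filter.eventually_gt_atTop 0)).exists
    exact hck.trans_le (le_iSup₂_of_le k hk0 le_rfl)
end

section
/- Let M be a commutative cancellative monoid whose associated reduced monoid M/M^× is finitely generated. Then M satisfies the ascending chain condition on divisorial ideals (M is a Mori monoid). -/
/-- `(M : X) = {x ∈ q(M) : xX ⊆ M}`, computed inside the quotient group `G`. -/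
def colonSet {G : Type*} [CommGroup G] (M : Submonoid G) (X : Set G) : Set G :=
  {x : G | ∀ y ∈ X, x * y ∈ M}

/-- The divisorial closure `X_v = (M : (M : X))`. -/
def vCl {G : Type*} [CommGroup G] (M : Submonoid G) (X : Set G) : Set G :=
  colonSet M (colonSet M X)

/-- `I` is a divisorial ideal of `M`: a subset of `M` with `I_v = I`. -/
def IsDivisorial {G : Type*} [CommGroup G] (M : Submonoid G) (I : Set G) : Prop :=
  I ⊆ (M : Set G) ∧ vCl M I = I

/-- `M` satisfies the ascending chain condition on divisorial ideals (`M` is Mori). -/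
def MoriACC {G : Type*} [CommGroup G] (M : Submonoid G) : Prop :=
  ∀ f : ℕ → Set G, (∀ n, IsDivisorial M (f n)) → (∀ n, f n ⊆ f (n + 1)) →
    ∃ N, ∀ n, N ≤ n → f n = f N

/-- `a` is an atom of `M`: a non-unit of `M` such that in any factorization `a = b * c`
with `b, c ∈ M`, one of `b, c` is a unit of `M`. -/
def IsAtomOf {G : Type*} [CommGroup G] (M : Submonoid G) (a : G) : Prop :=
  a ∈ M ∧ a⁻¹ ∉ M ∧ ∀ b c : G, b ∈ M → c ∈ M → a = b * c → b⁻¹ ∈ M ∨ c⁻¹ ∈ M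

/-!
Divisorial ideals are `s`-ideals (closed under multiplication by `M`). Every `a ∈ M` is a unit
times a monomial `∏ s ^ w s` in the finitely many generators, so an `s`-ideal is determined by
the exponent vectors `w` of the monomials it contains. These form a semigroup ideal of `ℕ ^ S`,
and by Dickson's lemma such ideals satisfy the ascending chain condition.
-/

section

variable {G : Type*} [CommGroup G] {M : Submonoid G}

def IsSIdeal (M : Submonoid G) (I : Set G) : Prop :=
  I ⊆ (M : Set G) ∧ ∀ m ∈ M, ∀ a ∈ I, m * a ∈ I

theorem mul_mem_vCl {X : Set G} {m a : G} (hm : m ∈ M) (ha : a ∈ vCl M X) :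
    m * a ∈ vCl M X := by
  intro y hy
  rw [mul_assoc]
  exact M.mul_mem hm (ha y hy)

theorem IsDivisorial.isSIdeal {I : Set G} (hI : IsDivisorial M I) : IsSIdeal M I := by
  refine ⟨hI.1, fun m hm a ha => ?_⟩
  rw [← hI.2] at ha ⊢
  exact mul_mem_vCl hm ha

theorem IsSIdeal.unit_mul_mem_iff {I : Set G} (hI : IsSIdeal M I) {u a : G} (hu : u ∈ M)
    (hu' : u⁻¹ ∈ M) : u * a ∈ I ↔ a ∈ I := by
  refine ⟨fun h => ?_, hI.2 u hu a⟩
  simpa using hI.2 _ hu' _ h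

def powProd (S : Finset G) (w : S → ℕ) : G :=
  ∏ s : S, (s : G) ^ w s

theorem powProd_add (S : Finset G) (v w : S → ℕ) :
    powProd S (v + w) = powProd S v * powProd S w := by
  simp only [powProd, Pi.add_apply, pow_add, Finset.prod_mul_distrib]

theorem powProd_mem {S : Finset G} (hS : ↑S ⊆ (M : Set G)) (w : S → ℕ) : powProd S w ∈ M :=
  M.prod_mem fun s _ => M.pow_mem (hS s.2) _

theorem List.prod_eq_powProd [DecidableEq G] {S : Finset G} {l : List G} (hl : ∀ x ∈ l, x ∈ S) :
    l.prod = powProd S fun s => l.count (s : G) := by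
  rw [Finset.prod_list_count_of_subset l S fun x hx => hl x (List.mem_toFinset.mp hx)]
  exact (Finset.prod_attach S fun x => x ^ l.count x).symm

def IsSIdeal.exponents {S : Finset G} (hS : ↑S ⊆ (M : Set G)) {I : Set G} (hI : IsSIdeal M I) :
    AddSemigroupIdeal (S → ℕ) where
  carrier := {w | powProd S w ∈ I}
  vadd_mem' v w hw := by
    change powProd S (v + w) ∈ I
    rw [powProd_add]
    exact hI.2 _ (powProd_mem hS v) _ hw

theorem IsSIdeal.chain_stabilizes {S : Finset G} (hS : ↑S ⊆ (M : Set G))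
    (hgen : ∀ a ∈ M, ∃ (u : G) (w : S → ℕ), u ∈ M ∧ u⁻¹ ∈ M ∧ a = u * powProd S w)
    (f : ℕ → Set G) (hf : ∀ n, IsSIdeal M (f n)) (hmono : ∀ n, f n ⊆ f (n + 1)) :
    ∃ N, ∀ n, N ≤ n → f n = f N := by
  have hf_mono : Monotone f := monotone_nat_of_le_succ hmono
  let F : ℕ →o AddSemigroupIdeal (S → ℕ) :=
    ⟨fun n => (hf n).exponents hS, fun m n hmn w hw => hf_mono hmn hw⟩
  obtain ⟨N, hN⟩ := wellFoundedGT_iff_monotone_chain_condition.mp inferInstance F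
  refine ⟨N, fun n hn => (hf_mono hn).antisymm' fun a ha => ?_⟩
  obtain ⟨u, w, hu, hu', rfl⟩ := hgen a ((hf n).1 ha)
  rw [(hf N).unit_mul_mem_iff hu hu']
  rw [(hf n).unit_mul_mem_iff hu hu'] at ha
  exact (SetLike.ext_iff.mp (hN n hn) w).mpr ha

end

theorem mori_of_finitely_generated_red_general {G : Type*} [CommGroup G] (M : Submonoid G)
    (S : Finset G) (hS : ↑S ⊆ (M : Set G))
    (hgen : ∀ a ∈ M, ∃ (l : List G) (u : G), (∀ x ∈ l, x ∈ S) ∧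
      u ∈ M ∧ u⁻¹ ∈ M ∧ a = u * l.prod) :
    MoriACC M := by
  classical
  have hgen' : ∀ a ∈ M, ∃ (u : G) (w : S → ℕ), u ∈ M ∧ u⁻¹ ∈ M ∧ a = u * powProd S w := by
    intro a ha
    obtain ⟨l, u, hl, hu, hu', rfl⟩ := hgen a ha
    exact ⟨u, _, hu, hu', by rw [List.prod_eq_powProd hl]⟩
  exact fun f hf hmono =>
    IsSIdeal.chain_stabilizes hS hgen' f (fun n => (hf n).isSIdeal) hmono

/-- If the reduced monoid `M/M^×` of a cancellative commutative monoid `M` (realized as a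
submonoid of its quotient group `G`) is finitely generated, then `M` satisfies the ACC on
divisorial ideals, i.e. `M` is a Mori monoid. -/
theorem mori_of_finitely_generated_red {G : Type*} [CommGroup G] (M : Submonoid G)
    (hq : ∀ g : G, ∃ a ∈ M, ∃ b ∈ M, g = a * b⁻¹)
    (S : Finset G) (hS : ↑S ⊆ (M : Set G))
    (hgen : ∀ a ∈ M, ∃ (l : List G) (u : G), (∀ x ∈ l, x ∈ S) ∧
      u ∈ M ∧ u⁻¹ ∈ M ∧ a = u * l.prod) :
    MoriACC M :=
  mori_of_finitely_generated_red_general M S hS hgen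
end

section
/- Let D be a commutative ring. The set GV(D) of Glaz–Vasconcelos ideals is multiplicatively closed: D ∈ GV(D), and if J_1, J_2 ∈ GV(D), then J_1 J_2 ∈ GV(D). -/
/-- `J` is a Glaz–Vasconcelos ideal of `R`: a nonzero finitely generated ideal for which
the natural map `φ : R → Hom_R(J, R)`, `r ↦ (x ↦ r * x)`, is an isomorphism. -/
def IsGVIdeal (R : Type*) [CommRing R] (J : Ideal R) : Prop :=
  J ≠ ⊥ ∧ J.FG ∧ Function.Bijective (fun r : R => (r • (Submodule.subtype J) : J →ₗ[R] R))

/-- The set `GV(R)` of Glaz–Vasconcelos ideals is multiplicatively closed: `R ∈ GV(R)`,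
and if `J₁, J₂ ∈ GV(R)` then `J₁J₂ ∈ GV(R)`. -/
theorem gv_multiplicatively_closed (R : Type*) [CommRing R] [Nontrivial R] :
    IsGVIdeal R ⊤ ∧
    ∀ J₁ J₂ : Ideal R, IsGVIdeal R J₁ → IsGVIdeal R J₂ → IsGVIdeal R (J₁ * J₂) := by
  constructor
  · refine ⟨?_, ⟨{1}, by simp⟩, ?_, ?_⟩
    · intro h
      have : (1 : R) ∈ (⊥ : Ideal R) := h ▸ Submodule.mem_top
      simp at this
    · intro r s hrs
      have := LinearMap.congr_fun hrs ⟨1, trivial⟩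
      simpa using this
    · intro f
      refine ⟨f ⟨1, trivial⟩, ?_⟩
      ext ⟨x, hx⟩
      have : (⟨x, hx⟩ : (⊤ : Ideal R)) = x • ⟨1, trivial⟩ := by
        ext; simp
      rw [this, map_smul]
      simp [mul_comm]
  · rintro J₁ J₂ ⟨h1ne, h1fg, h1inj, h1surj⟩ ⟨h2ne, h2fg, h2inj, h2surj⟩
    -- annihilator characterizations from injectivity
    have ann1 : ∀ r : R, (∀ x ∈ J₁, r * x = 0) → r = 0 := by
      intro r hr
      have h : (fun r : R => (r • (Submodule.subtype J₁) : J₁ →ₗ[R] R)) r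
          = (fun r : R => (r • (Submodule.subtype J₁) : J₁ →ₗ[R] R)) 0 := by
        ext ⟨x, hx⟩
        simp [hr x hx]
      exact h1inj h
    have ann2 : ∀ r : R, (∀ x ∈ J₂, r * x = 0) → r = 0 := by
      intro r hr
      have h : (fun r : R => (r • (Submodule.subtype J₂) : J₂ →ₗ[R] R)) r
          = (fun r : R => (r • (Submodule.subtype J₂) : J₂ →ₗ[R] R)) 0 := by
        ext ⟨x, hx⟩
        simp [hr x hx]
      exact h2inj h
    have annP : ∀ r : R, (∀ x ∈ J₁ * J₂, r * x = 0) → r = 0 := by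
      intro r hr
      refine ann1 r fun a ha => ann2 (r * a) fun b hb => ?_
      rw [mul_assoc]
      exact hr _ (Ideal.mul_mem_mul ha hb)
    -- surjectivity statements in concrete form
    have surj2 : ∀ g : J₂ →ₗ[R] R, ∃ r : R, ∀ b (hb : b ∈ J₂), g ⟨b, hb⟩ = r * b := by
      intro g
      obtain ⟨r, hr⟩ := h2surj g
      exact ⟨r, fun b hb => by
        have := LinearMap.congr_fun hr ⟨b, hb⟩
        simpa using this.symm⟩
    refine ⟨?_, Submodule.FG.mul h1fg h2fg, ?_, ?_⟩
    · intro h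
      obtain ⟨a, ha, ha0⟩ := Submodule.exists_mem_ne_zero_of_ne_bot h1ne
      refine ha0 (ann2 a fun b hb => ?_)
      have : a * b ∈ J₁ * J₂ := Ideal.mul_mem_mul ha hb
      rw [h] at this
      simpa using this
    · intro r s hrs
      have hz : ∀ x ∈ J₁ * J₂, (r - s) * x = 0 := by
        intro x hx
        have h := LinearMap.congr_fun hrs ⟨x, hx⟩
        simp only [LinearMap.smul_apply, Submodule.coe_subtype, smul_eq_mul] at h
        rw [sub_mul, h, sub_self]
      exact sub_eq_zero.mp (annP _ hz)
    · intro f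
      -- Step 1: for each a ∈ J₁ there is r with f(a*b) = r*b for all b ∈ J₂
      have step1 : ∀ a, a ∈ J₁ → ∃ r : R, ∀ b (hb : b ∈ J₂)
          (h : a * b ∈ J₁ * J₂), f ⟨a * b, h⟩ = r * b := by
        intro a ha
        let g : J₂ →ₗ[R] R :=
          f ∘ₗ LinearMap.codRestrict (Submodule.restrictScalars R (J₁ * J₂))
            ((LinearMap.mulLeft R a) ∘ₗ J₂.subtype)
            (fun b => Ideal.mul_mem_mul ha b.2)
        obtain ⟨r, hr⟩ := surj2 g
        exact ⟨r, fun b hb h => hr b hb⟩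
      choose! ra hra using step1
      -- Step 2: a ↦ ra a is linear on J₁
      have hadd : ∀ a ∈ J₁, ∀ a' ∈ J₁, ra (a + a') = ra a + ra a' := by
        intro a ha a' ha'
        have haa' : a + a' ∈ J₁ := J₁.add_mem ha ha'
        have hz : ∀ b ∈ J₂, (ra (a + a') - (ra a + ra a')) * b = 0 := by
          intro b hb
          have h1 := hra a ha b hb (Ideal.mul_mem_mul ha hb)
          have h2 := hra a' ha' b hb (Ideal.mul_mem_mul ha' hb)
          have h3 := hra (a + a') haa' b hb (Ideal.mul_mem_mul haa' hb)
          have hsum : f ⟨(a + a') * b, Ideal.mul_mem_mul haa' hb⟩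
              = f ⟨a * b, Ideal.mul_mem_mul ha hb⟩ + f ⟨a' * b, Ideal.mul_mem_mul ha' hb⟩ := by
            rw [← map_add]
            exact congrArg f (Subtype.ext (add_mul a a' b))
          calc (ra (a + a') - (ra a + ra a')) * b
              = ra (a + a') * b - (ra a * b + ra a' * b) := by ring
            _ = 0 := by rw [← h1, ← h2, ← h3, hsum]; ring
        exact sub_eq_zero.mp (ann2 _ hz)
      have hsmul : ∀ (t : R), ∀ a ∈ J₁, ra (t * a) = t * ra a := by
        intro t a ha
        have hta : t * a ∈ J₁ := Ideal.mul_mem_left _ _ ha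
        have hz : ∀ b ∈ J₂, (ra (t * a) - t * ra a) * b = 0 := by
          intro b hb
          have h1 := hra a ha b hb (Ideal.mul_mem_mul ha hb)
          have h3 := hra (t * a) hta b hb (Ideal.mul_mem_mul hta hb)
          have hsc : f ⟨(t * a) * b, Ideal.mul_mem_mul hta hb⟩
              = t * f ⟨a * b, Ideal.mul_mem_mul ha hb⟩ := by
            calc f ⟨(t * a) * b, Ideal.mul_mem_mul hta hb⟩
                = f (t • ⟨a * b, Ideal.mul_mem_mul ha hb⟩) :=
                  congrArg f (Subtype.ext (by simp [mul_assoc]))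
              _ = t * f ⟨a * b, Ideal.mul_mem_mul ha hb⟩ := by rw [map_smul, smul_eq_mul]
          calc (ra (t * a) - t * ra a) * b
              = ra (t * a) * b - t * (ra a * b) := by ring
            _ = 0 := by rw [← h1, ← h3, hsc]; ring
        exact sub_eq_zero.mp (ann2 _ hz)
      let g1 : J₁ →ₗ[R] R :=
        { toFun := fun a => ra a.1
          map_add' := fun a b => hadd a.1 a.2 b.1 b.2
          map_smul' := fun t a => by
            simp only [SetLike.val_smul, smul_eq_mul, RingHom.id_apply]
            exact hsmul t a.1 a.2 }
      obtain ⟨s, hs⟩ := h1surj g1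
      have hs' : ∀ a (ha : a ∈ J₁), ra a = s * a := by
        intro a ha
        have := LinearMap.congr_fun hs ⟨a, ha⟩
        simpa [g1] using this.symm
      refine ⟨s, ?_⟩
      ext ⟨x, hx⟩
      simp only [LinearMap.smul_apply, Submodule.coe_subtype, smul_eq_mul]
      induction hx using Submodule.mul_induction_on' with
      | mem_mul_mem a ha b hb =>
        rw [hra a ha b hb (Ideal.mul_mem_mul ha hb), hs' a ha, mul_assoc]
      | add x hx y hy ihx ihy =>
        have : f ⟨x + y, Submodule.add_mem _ hx hy⟩ = f ⟨x, hx⟩ + f ⟨y, hy⟩ := by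
          rw [← map_add]
          exact congrArg f (Subtype.ext rfl)
        rw [mul_add, ihx, ihy, ← this]
end

section
/- Let {V_1, …, V_n} be a finite collection of valuation subrings of a field K, all with quotient field K. Then D = V_1 ∩ ⋯ ∩ V_n is a Prüfer domain with quotient field K, i.e., for every prime ideal p of D the localization D_p is a valuation ring of K. -/
/-!
For `x ≠ 0` it suffices to find `b` with `b`, `b x` and `(1 - b) x⁻¹` in `D = ⋂ Vᵢ`: at a prime
`P` of `D`, either `b ∉ P` and `x = b x / b ∈ D_P`, or `1 - b ∉ P` and
`x⁻¹ = (1 - b) x⁻¹ / (1 - b) ∈ D_P`.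

Take `b = F⁻¹` with `F = x^(2L) - x^L + 1`, where `L ≠ 0` is a multiple of the orders of those
residues of `x` that have finite order. If `x ∈ Vᵢ`, its residue `ξ` satisfies
`ξ^(2L) - ξ^L + 1 ≠ 0` (a root would make `ξ^L` a primitive sixth root of unity, while `ξ^L = 1`
as soon as `ξ` has finite order), so `F` is a unit of `Vᵢ`. If `x ∉ Vᵢ`, then `y = x⁻¹` lies in
the maximal ideal of `Vᵢ` and `F = x^(2L) (y^(2L) - y^L + 1)` with the second factor a unit.
-/

open IsLocalRing

theorem pow_two_mul_sub_pow_add_one_ne_zero {R : Type*} [Ring R] [Nontrivial R] {ξ : R} {L : ℕ}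
    (hL : L ≠ 0) (hξ : IsOfFinOrder ξ → ξ ^ L = 1) : ξ ^ (2 * L) - ξ ^ L + 1 ≠ 0 := by
  intro h
  rw [mul_comm, pow_mul] at h
  have h6 : ξ ^ (L * 6) = 1 := by
    have h3 : (ξ ^ L) ^ 3 = -1 := calc
      (ξ ^ L) ^ 3 = (ξ ^ L + 1) * ((ξ ^ L) ^ 2 - ξ ^ L + 1) - 1 := by noncomm_ring
      _ = -1 := by rw [h]; noncomm_ring
    rw [pow_mul, show 6 = 3 * 2 from rfl, pow_mul, h3, neg_one_sq]
  have hξL := hξ (isOfFinOrder_iff_pow_eq_one.2 ⟨L * 6, by omega, h6⟩)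
  simp [hξL] at h

theorem exists_ne_zero_forall_pow_eq_one {ι : Type*} [Finite ι] {M : ι → Type*}
    [∀ i, Monoid (M i)] (ξ : ∀ i, M i) :
    ∃ L ≠ 0, ∀ i, IsOfFinOrder (ξ i) → ξ i ^ L = 1 := by
  classical
  have := Fintype.ofFinite ι
  let s := Finset.univ.filter fun i ↦ IsOfFinOrder (ξ i)
  refine ⟨∏ i ∈ s, orderOf (ξ i), ?_, fun i hi ↦ ?_⟩
  · exact Finset.prod_ne_zero_iff.2 fun i hi ↦ (Finset.mem_filter.1 hi).2.orderOf_pos.ne'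
  · exact orderOf_dvd_iff_pow_eq_one.1 (Finset.dvd_prod_of_mem _ (by simpa [s] using hi))

theorem IsLocalRing.isUnit_pow_two_mul_sub_pow_add_one {R : Type*} [CommRing R] [IsLocalRing R]
    {x : R} {L : ℕ} (hL : L ≠ 0) (hx : IsOfFinOrder (residue R x) → residue R x ^ L = 1) :
    IsUnit (x ^ (2 * L) - x ^ L + 1) := by
  rw [← residue_ne_zero_iff_isUnit]
  simpa using pow_two_mul_sub_pow_add_one_ne_zero hL hx

namespace ValuationSubring

variable {K : Type*} [Field K]

theorem inv_mem_of_isUnit (A : ValuationSubring K) {a : A} (ha : IsUnit a) : (a : K)⁻¹ ∈ A :=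
  A.mem_of_valuation_le_one _ (by rw [map_inv₀, (A.valuation_eq_one_iff a).1 ha, inv_one])

theorem inv_pow_two_mul_sub_pow_add_one_mem (A : ValuationSubring K) {x : K} (hx : x ≠ 0)
    {L : ℕ} (hL : L ≠ 0)
    (hres : ∀ hxA : x ∈ A, IsOfFinOrder (residue A ⟨x, hxA⟩) → residue A ⟨x, hxA⟩ ^ L = 1) :
    let b := (x ^ (2 * L) - x ^ L + 1)⁻¹
    b ∈ A ∧ b * x ∈ A ∧ (1 - b) * x⁻¹ ∈ A := by
  obtain ⟨n, rfl⟩ := Nat.exists_eq_add_one_of_ne_zero hL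
  by_cases hxA : x ∈ A
  · have hF := isUnit_pow_two_mul_sub_pow_add_one hL (hres hxA)
    have hb : (x ^ (2 * (n + 1)) - x ^ (n + 1) + 1)⁻¹ ∈ A := by
      simpa using A.inv_mem_of_isUnit hF
    have hF0 : x ^ (2 * (n + 1)) - x ^ (n + 1) + 1 ≠ 0 := by
      simpa using (Subring.coe_eq_zero_iff _).not.2 hF.ne_zero
    refine ⟨hb, A.mul_mem _ _ hb hxA, ?_⟩
    convert A.mul_mem _ _
      (A.mul_mem _ _ (pow_mem hxA n) (sub_mem (pow_mem hxA (n + 1)) A.one_mem)) hb using 1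
    field_simp
    ring
  · have hy : x⁻¹ ∈ A := (A.mem_or_inv_mem x).resolve_left hxA
    have hY : residue A ⟨x⁻¹, hy⟩ = 0 := by
      rw [residue_eq_zero_iff, ← coe_mem_nonunits_iff]
      exact A.inv_mem_nonunits_iff.2 (Or.inr hxA)
    have hG : IsUnit ((⟨x⁻¹, hy⟩ : A) ^ (2 * (n + 1)) - ⟨x⁻¹, hy⟩ ^ (n + 1) + 1) := by
      rw [← residue_ne_zero_iff_isUnit, map_add, map_sub, map_pow, map_pow, map_one, hY]
      simp
    have hGF : x⁻¹ ^ (2 * (n + 1)) - x⁻¹ ^ (n + 1) + 1 =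
        x⁻¹ ^ (2 * (n + 1)) * (x ^ (2 * (n + 1)) - x ^ (n + 1) + 1) := by
      simp only [inv_pow]
      field_simp
      ring
    have hc := A.inv_mem_of_isUnit hG
    have hG0 := (Subring.coe_eq_zero_iff _).not.2 hG.ne_zero
    push_cast [hGF] at hc hG0
    have hF0 : x ^ (2 * (n + 1)) - x ^ (n + 1) + 1 ≠ 0 := right_ne_zero_of_mul hG0
    refine ⟨?_, ?_, ?_⟩
    · convert A.mul_mem _ _ (pow_mem hy (2 * (n + 1))) hc using 1
      simp only [inv_pow]
      field_simp
    · convert A.mul_mem _ _ (pow_mem hy (2 * n + 1)) hc using 1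
      simp only [inv_pow]
      field_simp
      ring
    · convert A.mul_mem _ _ (A.mul_mem _ _ hy (sub_mem A.one_mem (pow_mem hy (n + 1)))) hc using 1
      simp only [inv_pow]
      field_simp
      ring

theorem exists_mem_iInf_mul_mem_one_sub_mul_inv_mem {ι : Type*} [Finite ι]
    (V : ι → ValuationSubring K) (x : K) :
    ∃ b ∈ ⨅ i, (V i).toSubring, b * x ∈ ⨅ i, (V i).toSubring ∧
      (1 - b) * x⁻¹ ∈ ⨅ i, (V i).toSubring := by
  simp only [Subring.mem_iInf, mem_toSubring]
  rcases eq_or_ne x 0 with rfl | hx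
  · exact ⟨1, fun i ↦ (V i).one_mem, by simp [(V _).zero_mem]⟩
  obtain ⟨L, hL, hξ⟩ :=
    exists_ne_zero_forall_pow_eq_one fun i : {i // x ∈ V i} ↦ residue (V i) ⟨x, i.2⟩
  have hb i := (V i).inv_pow_two_mul_sub_pow_add_one_mem hx hL fun hxV ↦ hξ ⟨i, hxV⟩
  exact ⟨_, fun i ↦ (hb i).1, fun i ↦ (hb i).2.1, fun i ↦ (hb i).2.2⟩

end ValuationSubring

namespace Subring

variable {K : Type*} [Field K]

def localization (D : Subring K) (S : Submonoid D) : Subring K where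
  carrier := {x | ∃ a : D, ∃ s ∈ S, x * s = a}
  mul_mem' := by
    rintro x y ⟨a, s, hs, hxs⟩ ⟨c, t, ht, hyt⟩
    exact ⟨a * c, s * t, S.mul_mem hs ht, by push_cast; rw [← hxs, ← hyt]; ring⟩
  one_mem' := ⟨1, 1, S.one_mem, by simp⟩
  add_mem' := by
    rintro x y ⟨a, s, hs, hxs⟩ ⟨c, t, ht, hyt⟩
    exact ⟨a * t + c * s, s * t, S.mul_mem hs ht, by push_cast; rw [← hxs, ← hyt]; ring⟩
  zero_mem' := ⟨0, 1, S.one_mem, by simp⟩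
  neg_mem' := by
    rintro x ⟨a, s, hs, hxs⟩
    exact ⟨-a, s, hs, by push_cast; rw [← hxs]; ring⟩

theorem mem_localization_or_inv_mem {D : Subring K} (P : Ideal D) [P.IsPrime] {x b : K}
    (hb : b ∈ D) (hbx : b * x ∈ D) (hb'x : (1 - b) * x⁻¹ ∈ D) :
    x ∈ D.localization P.primeCompl ∨ x⁻¹ ∈ D.localization P.primeCompl := by
  by_cases hbP : ⟨b, hb⟩ ∈ P
  · refine .inr ⟨⟨_, hb'x⟩, 1 - ⟨b, hb⟩, fun h ↦ ?_, by push_cast; ring⟩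
    exact Ideal.IsPrime.ne_top ‹_› <| (Ideal.eq_top_iff_one _).2 <| by
      simpa using P.add_mem h hbP
  · exact .inl ⟨⟨_, hbx⟩, ⟨b, hb⟩, hbP, mul_comm _ _⟩

theorem exists_mul_eq_of_mul_mem_of_mul_inv_mem {D : Subring K} {x b : K} (hx : x ≠ 0)
    (hb : b ∈ D) (hbx : b * x ∈ D) (hb'x : (1 - b) * x⁻¹ ∈ D) :
    ∃ a c : D, (c : K) ≠ 0 ∧ x * c = a := by
  rcases eq_or_ne b 0 with rfl | hb0
  · exact ⟨1, ⟨x⁻¹, by simpa using hb'x⟩, inv_ne_zero hx, mul_inv_cancel₀ hx⟩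
  · exact ⟨⟨_, hbx⟩, ⟨b, hb⟩, hb0, mul_comm _ _⟩

end Subring

theorem inf_valuationSubrings_prufer_general {K : Type*} [Field K] {ι : Type*} [Finite ι]
    (V : ι → ValuationSubring K) :
    (∀ x : K, ∃ a b : (⨅ i, (V i).toSubring : Subring K), (b : K) ≠ 0 ∧ x * b = a) ∧
    (∀ P : Ideal (⨅ i, (V i).toSubring : Subring K), P.IsPrime →
      ∃ W : ValuationSubring K, (W : Set K) =
        {x : K | ∃ a b : (⨅ i, (V i).toSubring : Subring K), b ∉ P ∧ x * (b : K) = (a : K)}) := by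
  refine ⟨fun x ↦ ?_, fun P hP ↦ ?_⟩
  · rcases eq_or_ne x 0 with rfl | hx
    · exact ⟨0, 1, one_ne_zero, by simp⟩
    obtain ⟨b, hb, hbx, hb'x⟩ := ValuationSubring.exists_mem_iInf_mul_mem_one_sub_mul_inv_mem V x
    exact Subring.exists_mul_eq_of_mul_mem_of_mul_inv_mem hx hb hbx hb'x
  · refine ⟨{ (⨅ i, (V i).toSubring).localization P.primeCompl with
      mem_or_inv_mem' := fun x ↦ ?_ }, rfl⟩
    obtain ⟨b, hb, hbx, hb'x⟩ := ValuationSubring.exists_mem_iInf_mul_mem_one_sub_mul_inv_mem V x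
    exact Subring.mem_localization_or_inv_mem P hb hbx hb'x

/-- Let `V₁, …, Vₙ` be a finite nonempty collection of valuation subrings of a field `K`
(each with quotient field `K`). Then `D = V₁ ∩ ⋯ ∩ Vₙ` is a Prüfer domain with quotient
field `K`: `K` is the fraction field of `D`, and for every prime ideal `P` of `D` the
localization `D_P = {a/b : a ∈ D, b ∈ D \ P}` is a valuation ring of `K`. -/
theorem inf_valuationSubrings_prufer {K : Type*} [Field K] {ι : Type*} [Finite ι]
    [Nonempty ι] (V : ι → ValuationSubring K) :
    (∀ x : K, ∃ a b : (⨅ i, (V i).toSubring : Subring K), (b : K) ≠ 0 ∧ x * b = a) ∧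
    (∀ P : Ideal (⨅ i, (V i).toSubring : Subring K), P.IsPrime →
      ∃ W : ValuationSubring K, (W : Set K) =
        {x : K | ∃ a b : (⨅ i, (V i).toSubring : Subring K), b ∉ P ∧ x * (b : K) = (a : K)}) :=
  inf_valuationSubrings_prufer_general V
end
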